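/- For any two real square matrices A, B of the same dimension, ‖|A| − |B|‖_F ≤ √2 · ‖A − B‖_F, where |·| is the matrix absolute value and ‖·‖_F the Frobenius norm. -/

import Mathlib

open Matrix

noncomputable def matAbs {n : Type*} [Fintype n] [DecidableEq n] (A : Matrix n n ℝ) :
    Matrix n n ℝ :=
  let hA := Matrix.posSemidef_conjTranspose_mul_self A
  (hA.1.eigenvectorUnitary : Matrix n n ℝ) *
    diagonal (fun i => ((Real.sqrt (hA.1.eigenvalues i) : ℝ) : ℝ)) *
    (star hA.1.eigenvectorUnitary : Matrix n n ℝ)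

/-- Frobenius norm of a real matrix. -/
noncomputable def frobNorm {n : Type*} [Fintype n] (M : Matrix n n ℝ) : ℝ :=
  Real.sqrt (∑ i, ∑ j, (M i j) ^ 2)


/-!
Write `|A| = U diag(p) Uᵀ` and `|B| = V diag(q) Vᵀ` with `U`, `V` orthogonal and `p, q ≥ 0`.
Since `(AU)ᵀ(AU) = diag(p²)`, we get `AU = X diag(p)` with `X` a partial isometry, and likewise
`BV = Y diag(q)`. The matrix `S = Uᵀ(|A| - |B|)V` then solves the Sylvester equation
`diag(p) S + S diag(q) = Uᵀ(AᵀA - BᵀB)V = diag(p) G + H diag(q)` with `G = Xᵀ(A - B)V` and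
`H = Uᵀ(A - B)ᵀY`, i.e. `(pᵢ + qⱼ) Sᵢⱼ = pᵢ Gᵢⱼ + qⱼ Hᵢⱼ`, whence `Sᵢⱼ² ≤ Gᵢⱼ² + Hᵢⱼ²`.
Partial isometries do not increase the Frobenius norm and orthogonal matrices preserve it, so
`‖|A| - |B|‖² ≤ ‖G‖² + ‖H‖² ≤ 2 ‖A - B‖²`.
-/

section FrobeniusNorm

variable {n : Type*} [Fintype n]

lemma frobNorm_nonneg (M : Matrix n n ℝ) : 0 ≤ frobNorm M :=
  Real.sqrt_nonneg _

lemma frobNorm_sq (M : Matrix n n ℝ) : frobNorm M ^ 2 = ∑ i, ∑ j, M i j ^ 2 := by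
  rw [frobNorm, Real.sq_sqrt (by positivity)]

lemma frobNorm_sq_eq_trace (M : Matrix n n ℝ) : frobNorm M ^ 2 = trace (Mᵀ * M) := by
  rw [frobNorm_sq]
  simp only [trace, diag_apply, mul_apply, transpose_apply, sq]
  exact Finset.sum_comm

lemma frobNorm_transpose (M : Matrix n n ℝ) : frobNorm Mᵀ = frobNorm M := by
  rw [frobNorm, frobNorm, Finset.sum_comm]
  rfl

variable [DecidableEq n]

lemma frobNorm_mul_of_mem_orthogonalGroup (M : Matrix n n ℝ) {V : Matrix n n ℝ}
    (hV : V ∈ orthogonalGroup n ℝ) : frobNorm (M * V) = frobNorm M := by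
  have h : (M * V)ᵀ * (M * V) = Vᵀ * (Mᵀ * M * V) := by simp only [transpose_mul, mul_assoc]
  rw [← sq_eq_sq₀ (frobNorm_nonneg _) (frobNorm_nonneg _), frobNorm_sq_eq_trace,
    frobNorm_sq_eq_trace, h, trace_mul_comm, mul_assoc, (mem_orthogonalGroup_iff n ℝ).mp hV,
    mul_one]

lemma frobNorm_transpose_mul_of_mem_orthogonalGroup {U : Matrix n n ℝ}
    (hU : U ∈ orthogonalGroup n ℝ) (M : Matrix n n ℝ) : frobNorm (Uᵀ * M) = frobNorm M := by
  rw [← frobNorm_transpose, transpose_mul, transpose_transpose,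
    frobNorm_mul_of_mem_orthogonalGroup _ hU, frobNorm_transpose]

end FrobeniusNorm

section PartialIsometry

variable {n : Type*} [Fintype n]

def IsPartialIsometry (X : Matrix n n ℝ) : Prop :=
  X * Xᵀ * X = X

variable [DecidableEq n]

lemma IsPartialIsometry.frobNorm_transpose_mul_le {X : Matrix n n ℝ} (hX : IsPartialIsometry X)
    (Y : Matrix n n ℝ) : frobNorm (Xᵀ * Y) ≤ frobNorm Y := by
  have hproj : (1 - X * Xᵀ)ᵀ * (1 - X * Xᵀ) = 1 - X * Xᵀ := by
    have hidem : X * Xᵀ * (X * Xᵀ) = X * Xᵀ := by rw [← mul_assoc, hX]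
    rw [transpose_sub, transpose_one, transpose_mul, transpose_transpose]
    simp only [sub_mul, mul_sub, one_mul, mul_one, hidem, sub_self, sub_zero]
  have hsum : (Xᵀ * Y)ᵀ * (Xᵀ * Y) + ((1 - X * Xᵀ) * Y)ᵀ * ((1 - X * Xᵀ) * Y) = Yᵀ * Y := by
    calc (Xᵀ * Y)ᵀ * (Xᵀ * Y) + ((1 - X * Xᵀ) * Y)ᵀ * ((1 - X * Xᵀ) * Y)
        = Yᵀ * (X * Xᵀ) * Y + Yᵀ * ((1 - X * Xᵀ)ᵀ * (1 - X * Xᵀ)) * Y := by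
          simp only [transpose_mul, transpose_transpose, mul_assoc]
      _ = Yᵀ * Y := by rw [hproj]; noncomm_ring
  have hpyth : frobNorm (Xᵀ * Y) ^ 2 + frobNorm ((1 - X * Xᵀ) * Y) ^ 2 = frobNorm Y ^ 2 := by
    rw [frobNorm_sq_eq_trace, frobNorm_sq_eq_trace, frobNorm_sq_eq_trace, ← trace_add, hsum]
  exact (sq_le_sq₀ (frobNorm_nonneg _) (frobNorm_nonneg _)).mp
    (by linarith [sq_nonneg (frobNorm ((1 - X * Xᵀ) * Y))])

lemma IsPartialIsometry.frobNorm_mul_le {X : Matrix n n ℝ} (hX : IsPartialIsometry X)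
    (Y : Matrix n n ℝ) : frobNorm (Y * X) ≤ frobNorm Y := by
  simpa only [← transpose_mul, frobNorm_transpose] using hX.frobNorm_transpose_mul_le Yᵀ

lemma exists_isPartialIsometry_mul_diagonal {K : Matrix n n ℝ} {d : n → ℝ}
    (hK : Kᵀ * K = diagonal (d ^ 2)) : ∃ X, IsPartialIsometry X ∧ K = X * diagonal d := by
  -- `d⁻¹` is `0` where `d` vanishes; the corresponding columns of `K` vanish as well, since
  -- their squared norms are the entries of `d ^ 2`.
  refine ⟨K * diagonal d⁻¹, ?_, ?_⟩
  · calc K * diagonal d⁻¹ * (K * diagonal d⁻¹)ᵀ * (K * diagonal d⁻¹)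
        = K * (diagonal d⁻¹ * diagonal d⁻¹ * (Kᵀ * K) * diagonal d⁻¹) := by
          simp only [transpose_mul, diagonal_transpose, mul_assoc]
      _ = K * diagonal d⁻¹ := by
          rw [hK, diagonal_mul_diagonal, diagonal_mul_diagonal, diagonal_mul_diagonal]
          congr 2
          funext i
          by_cases hi : d i = 0 <;> simp [hi]
          field_simp
  · set e : n → ℝ := fun i => 1 - (d i)⁻¹ * d i
    have hR : (K * diagonal e)ᵀ * (K * diagonal e) = 0 := by
      rw [transpose_mul, diagonal_transpose, mul_assoc, ← mul_assoc Kᵀ, hK,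
        diagonal_mul_diagonal, diagonal_mul_diagonal, ← diagonal_zero]
      congr 1
      funext i
      by_cases hi : d i = 0 <;> simp [e, hi]
    rw [← conjTranspose_eq_transpose_of_trivial, conjTranspose_mul_self_eq_zero] at hR
    calc K = K * diagonal (fun i => (d i)⁻¹ * d i + e i) := by simp [e]
      _ = K * diagonal d⁻¹ * diagonal d + K * diagonal e := by
          rw [mul_assoc, ← mul_add, diagonal_mul_diagonal, diagonal_add]
          rfl
      _ = K * diagonal d⁻¹ * diagonal d := by rw [hR, add_zero]

end PartialIsometry

lemma sq_le_sq_add_sq_of_add_mul_eq {p q x α β : ℝ} (hp : 0 ≤ p) (hq : 0 ≤ q)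
    (h : (p + q) * x = p * α + q * β) (h₀ : p = 0 → q = 0 → x = 0) : x ^ 2 ≤ α ^ 2 + β ^ 2 := by
  rcases (add_nonneg hp hq).eq_or_lt with hpq | hpq
  · rw [h₀ (by linarith) (by linarith)]
    nlinarith [sq_nonneg α, sq_nonneg β]
  · refine le_of_mul_le_mul_left ?_ (pow_pos hpq 2)
    rw [← mul_pow, h]
    -- `(pα + qβ)² ≤ (p² + q²)(α² + β²) ≤ (p + q)²(α² + β²)`
    nlinarith [sq_nonneg (p * β - q * α), mul_nonneg hp hq, sq_nonneg (α - β)]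

section Perturbation

variable {n : Type*} [Fintype n] [DecidableEq n]

lemma frobNorm_sq_le_of_diagonal_mul_add_mul_diagonal {p q : n → ℝ} (hp : 0 ≤ p) (hq : 0 ≤ q)
    {S M G H : Matrix n n ℝ} (hS : S = diagonal p * M - M * diagonal q)
    (h : diagonal p * S + S * diagonal q = diagonal p * G + H * diagonal q) :
    frobNorm S ^ 2 ≤ frobNorm G ^ 2 + frobNorm H ^ 2 := by
  have hentry : ∀ i j, S i j ^ 2 ≤ G i j ^ 2 + H i j ^ 2 := by
    intro i j
    have hij := congr_fun₂ h i j
    simp only [Matrix.add_apply, diagonal_mul, mul_diagonal] at hij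
    refine sq_le_sq_add_sq_of_add_mul_eq (hp i) (hq j) (by linear_combination hij) ?_
    intro hpi hqj
    simp [hS, hpi, hqj]
  simp only [frobNorm_sq, ← Finset.sum_add_distrib]
  gcongr with i _ j _
  exact hentry i j

lemma transpose_mul_conj_diagonal_sub_mul {U V : Matrix n n ℝ} (hU : U ∈ orthogonalGroup n ℝ)
    (hV : V ∈ orthogonalGroup n ℝ) (d e : n → ℝ) :
    Uᵀ * (U * diagonal d * Uᵀ - V * diagonal e * Vᵀ) * V =
      diagonal d * (Uᵀ * V) - Uᵀ * V * diagonal e := by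
  have hUU : Uᵀ * U = 1 := (mem_orthogonalGroup_iff' n ℝ).mp hU
  have hVV : Vᵀ * V = 1 := (mem_orthogonalGroup_iff' n ℝ).mp hV
  calc Uᵀ * (U * diagonal d * Uᵀ - V * diagonal e * Vᵀ) * V
      = (Uᵀ * U) * diagonal d * (Uᵀ * V) - Uᵀ * V * diagonal e * (Vᵀ * V) := by noncomm_ring
    _ = _ := by rw [hUU, hVV, one_mul, mul_one]

lemma frobNorm_conj_diagonal_sub_sq_le {U V : Matrix n n ℝ} (hU : U ∈ orthogonalGroup n ℝ)
    (hV : V ∈ orthogonalGroup n ℝ) {p q : n → ℝ} (hp : 0 ≤ p) (hq : 0 ≤ q) {G H : Matrix n n ℝ}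
    (h : Uᵀ * (U * diagonal (p ^ 2) * Uᵀ - V * diagonal (q ^ 2) * Vᵀ) * V =
      diagonal p * G + H * diagonal q) :
    frobNorm (U * diagonal p * Uᵀ - V * diagonal q * Vᵀ) ^ 2 ≤ frobNorm G ^ 2 + frobNorm H ^ 2 := by
  have hsq : ∀ d : n → ℝ, diagonal (d ^ 2) = diagonal d * diagonal d := fun d => by
    rw [diagonal_mul_diagonal, sq]
    rfl
  rw [← frobNorm_mul_of_mem_orthogonalGroup _ hV, ← frobNorm_transpose_mul_of_mem_orthogonalGroup hU,
    ← mul_assoc]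
  refine frobNorm_sq_le_of_diagonal_mul_add_mul_diagonal hp hq
    (transpose_mul_conj_diagonal_sub_mul hU hV p q) ?_
  rw [transpose_mul_conj_diagonal_sub_mul hU hV, ← h, transpose_mul_conj_diagonal_sub_mul hU hV,
    hsq, hsq]
  noncomm_ring

end Perturbation

section SpectralDecomposition

variable {n : Type*} [Fintype n] [DecidableEq n]

lemma exists_matAbs_eq_conj_diagonal (A : Matrix n n ℝ) :
    ∃ U ∈ orthogonalGroup n ℝ, ∃ p : n → ℝ, 0 ≤ p ∧
      matAbs A = U * diagonal p * Uᵀ ∧ Aᵀ * A = U * diagonal (p ^ 2) * Uᵀ := by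
  have hA := posSemidef_conjTranspose_mul_self A
  refine ⟨hA.1.eigenvectorUnitary, hA.1.eigenvectorUnitary.2, fun i => √(hA.1.eigenvalues i),
    fun i => Real.sqrt_nonneg _, ?_, ?_⟩
  · simp only [matAbs, star_eq_conjTranspose, conjTranspose_eq_transpose_of_trivial]
  · have hsqrt : (fun i => √(hA.1.eigenvalues i)) ^ 2 = hA.1.eigenvalues :=
      funext fun i => Real.sq_sqrt (hA.eigenvalues_nonneg i)
    convert hA.1.spectral_theorem using 1
    · rw [conjTranspose_eq_transpose_of_trivial]
    · rw [hsqrt, Unitary.conjStarAlgAut_apply, star_eq_conjTranspose,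
        conjTranspose_eq_transpose_of_trivial (hA.1.eigenvectorUnitary : Matrix n n ℝ),
        RCLike.ofReal_real_eq_id, Function.id_comp]

lemma transpose_mul_mul_self_eq_diagonal {A U : Matrix n n ℝ} (hU : U ∈ orthogonalGroup n ℝ)
    {d : n → ℝ} (hA : Aᵀ * A = U * diagonal d * Uᵀ) : (A * U)ᵀ * (A * U) = diagonal d := by
  have hUU : Uᵀ * U = 1 := (mem_orthogonalGroup_iff' n ℝ).mp hU
  calc (A * U)ᵀ * (A * U) = Uᵀ * (Aᵀ * A) * U := by simp only [transpose_mul, mul_assoc]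
    _ = (Uᵀ * U) * diagonal d * (Uᵀ * U) := by rw [hA]; noncomm_ring
    _ = diagonal d := by rw [hUU, one_mul, mul_one]

lemma transpose_mul_gram_sub_gram_mul {A B U V X Y : Matrix n n ℝ} {p q : n → ℝ}
    (hAX : A * U = X * diagonal p) (hBY : B * V = Y * diagonal q) :
    Uᵀ * (Aᵀ * A - Bᵀ * B) * V =
      diagonal p * (Xᵀ * (A - B) * V) + Uᵀ * (A - B)ᵀ * Y * diagonal q :=
  calc Uᵀ * (Aᵀ * A - Bᵀ * B) * V = (A * U)ᵀ * (A - B) * V + Uᵀ * (A - B)ᵀ * (B * V) := by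
        simp only [transpose_mul, transpose_sub]
        noncomm_ring
    _ = _ := by
        rw [hAX, hBY, transpose_mul, diagonal_transpose]
        noncomm_ring

end SpectralDecomposition

theorem matAbs_frobenius_perturbation (n : ℕ) (A B : Matrix (Fin n) (Fin n) ℝ) :
    frobNorm (matAbs A - matAbs B) ≤ Real.sqrt 2 * frobNorm (A - B) := by
  obtain ⟨U, hU, p, hp, hPA, hAA⟩ := exists_matAbs_eq_conj_diagonal A
  obtain ⟨V, hV, q, hq, hQB, hBB⟩ := exists_matAbs_eq_conj_diagonal B
  obtain ⟨X, hX, hAX⟩ :=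
    exists_isPartialIsometry_mul_diagonal (transpose_mul_mul_self_eq_diagonal hU hAA)
  obtain ⟨Y, hY, hBY⟩ :=
    exists_isPartialIsometry_mul_diagonal (transpose_mul_mul_self_eq_diagonal hV hBB)
  set C := A - B
  have hG : frobNorm (Xᵀ * C * V) ≤ frobNorm C :=
    calc frobNorm (Xᵀ * C * V) = frobNorm (Xᵀ * (C * V)) := by rw [mul_assoc]
      _ ≤ frobNorm (C * V) := hX.frobNorm_transpose_mul_le _
      _ = frobNorm C := frobNorm_mul_of_mem_orthogonalGroup C hV
  have hH : frobNorm (Uᵀ * Cᵀ * Y) ≤ frobNorm C :=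
    calc frobNorm (Uᵀ * Cᵀ * Y) ≤ frobNorm (Uᵀ * Cᵀ) := hY.frobNorm_mul_le _
      _ = frobNorm Cᵀ := frobNorm_transpose_mul_of_mem_orthogonalGroup hU _
      _ = frobNorm C := frobNorm_transpose C
  have hsq : frobNorm (matAbs A - matAbs B) ^ 2 ≤ 2 * frobNorm C ^ 2 :=
    calc frobNorm (matAbs A - matAbs B) ^ 2
        ≤ frobNorm (Xᵀ * C * V) ^ 2 + frobNorm (Uᵀ * Cᵀ * Y) ^ 2 := by
          rw [hPA, hQB]
          refine frobNorm_conj_diagonal_sub_sq_le hU hV hp hq ?_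
          rw [← hAA, ← hBB]
          exact transpose_mul_gram_sub_gram_mul hAX hBY
      _ ≤ frobNorm C ^ 2 + frobNorm C ^ 2 :=
          add_le_add (pow_le_pow_left₀ (frobNorm_nonneg _) hG 2)
            (pow_le_pow_left₀ (frobNorm_nonneg _) hH 2)
      _ = 2 * frobNorm C ^ 2 := by ring
  have := Real.sqrt_le_sqrt hsq
  rwa [Real.sqrt_mul zero_le_two, Real.sqrt_sq (frobNorm_nonneg _),
    Real.sqrt_sq (frobNorm_nonneg _)] at this
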